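/- arXiv:2312.10154 — 3 statements merged into one kernel-verified Lean document; each statement's English description precedes it below -/
import Mathlib

section
/- Let K_{m,n} be the complete bipartite graph with parts of sizes m and n. Then Z⁺₍ℓ₎(K_{m,n}) = min(m,n) if ℓ < min(m,n); Z⁺₍ℓ₎(K_{m,n}) = max(m,n) if min(m,n) ≤ ℓ < max(m,n); and Z⁺₍ℓ₎(K_{m,n}) = m + n if ℓ ≥ max(m,n). -/
open SimpleGraph Set

variable {V : Type*}

/-- `w'` lies in the same connected component of `G - B` as `w` (both non-blue). -/
def SameComp (G : SimpleGraph V) (B : Set V) (w w' : V) : Prop :=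
  ∃ (hw : w ∈ Bᶜ) (hw' : w' ∈ Bᶜ), (G.induce Bᶜ).Reachable ⟨w, hw⟩ ⟨w', hw'⟩

/-- With blue set `B` and leak set `L`, the blue non-leak vertex `u` can psd-force
`w`, i.e. `w` is the unique non-blue neighbor of `u` in the component of `G - B`
containing `w` (together with `B`). -/
def PsdForce (G : SimpleGraph V) (L B : Set V) (u w : V) : Prop :=
  u ∈ B ∧ u ∉ L ∧ w ∉ B ∧ G.Adj u w ∧
    ∀ w', G.Adj u w' → SameComp G B w w' → w' = w

/-- Iterative application of the psd color change rule with leaks `L`. -/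
inductive PsdDeriv (G : SimpleGraph V) (L : Set V) : Set V → Set V → Prop
  | refl (B : Set V) : PsdDeriv G L B B
  | step {B C : Set V} {u w : V} : PsdDeriv G L B C → PsdForce G L C u w →
      PsdDeriv G L B (insert w C)

/-- `B` is an `ℓ`-leaky positive semidefinite forcing set of `G`. -/
def IsLeakyPsdForcingSet (G : SimpleGraph V) (ℓ : ℕ) (B : Set V) : Prop :=
  ∀ L : Set V, L.Finite → L.ncard ≤ ℓ → PsdDeriv G L B Set.univ

/-- The `ℓ`-leaky positive semidefinite forcing number of `G`. -/
noncomputable def leakyPsdNum [Fintype V] (G : SimpleGraph V) (ℓ : ℕ) : ℕ :=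
  sInf {k | ∃ B : Set V, B.ncard = k ∧ IsLeakyPsdForcingSet G ℓ B}

section Aux

lemma psdDeriv_trans {G : SimpleGraph V} {L A B C : Set V}
    (h1 : PsdDeriv G L A B) (h2 : PsdDeriv G L B C) : PsdDeriv G L A C := by
  induction h2 with
  | refl => exact h1
  | step _ f ih => exact ih.step f

lemma psd_blocked {G : SimpleGraph V} {L B C : Set V} {w : V} (hw : w ∉ B)
    (hnb : ∀ u, G.Adj u w → u ∈ L) (h : PsdDeriv G L B C) : w ∉ C := by
  induction h with
  | refl => exact hw
  | step _ f ih =>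
    intro hmem
    rcases Set.mem_insert_iff.mp hmem with rfl | hmem
    · exact f.2.1 (hnb _ f.2.2.2.1)
    · exact ih hmem

variable {α β : Type*} [Fintype α] [Fintype β]

lemma ncard_range_inl : (Set.range (Sum.inl : α → α ⊕ β)).ncard = Fintype.card α := by
  rw [← Set.image_univ, Set.ncard_image_of_injective _ Sum.inl_injective, Set.ncard_univ,
    Nat.card_eq_fintype_card]

lemma ncard_range_inr : (Set.range (Sum.inr : β → α ⊕ β)).ncard = Fintype.card β := by
  rw [← Set.image_univ, Set.ncard_image_of_injective _ Sum.inr_injective, Set.ncard_univ,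
    Nat.card_eq_fintype_card]

lemma reach_eq_inr {s : Set (α ⊕ β)} (hs : ∀ x ∈ s, ∃ b, x = Sum.inr b)
    {x y : ↥s} (h : ((completeBipartiteGraph α β).induce s).Reachable x y) : x = y := by
  have hbot : ∀ a b : ↥s, ¬ ((completeBipartiteGraph α β).induce s).Adj a b := by
    intro a b hab
    have hA : (completeBipartiteGraph α β).Adj ↑a ↑b := hab
    obtain ⟨c, hc⟩ := hs _ a.2
    obtain ⟨d, hd⟩ := hs _ b.2
    rw [hc, hd] at hA
    simp at hA
  obtain ⟨p⟩ := h
  cases p with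
  | nil => rfl
  | cons hadj _ => exact absurd hadj (hbot _ _)

lemma reach_eq_inl {s : Set (α ⊕ β)} (hs : ∀ x ∈ s, ∃ a, x = Sum.inl a)
    {x y : ↥s} (h : ((completeBipartiteGraph α β).induce s).Reachable x y) : x = y := by
  have hbot : ∀ a b : ↥s, ¬ ((completeBipartiteGraph α β).induce s).Adj a b := by
    intro a b hab
    have hA : (completeBipartiteGraph α β).Adj ↑a ↑b := hab
    obtain ⟨c, hc⟩ := hs _ a.2
    obtain ⟨d, hd⟩ := hs _ b.2
    rw [hc, hd] at hA
    simp at hA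
  obtain ⟨p⟩ := h
  cases p with
  | nil => rfl
  | cons hadj _ => exact absurd hadj (hbot _ _)

lemma psd_force_from_left {L : Set (α ⊕ β)} (hL : L.ncard < Fintype.card α) :
    ∀ (C : Set (α ⊕ β)), Set.range Sum.inl ⊆ C →
      PsdDeriv (completeBipartiteGraph α β) L C Set.univ := by
  have key : ∀ k (C : Set (α ⊕ β)), Cᶜ.ncard = k → Set.range Sum.inl ⊆ C →
      PsdDeriv (completeBipartiteGraph α β) L C Set.univ := by
    intro k
    induction k using Nat.strong_induction_on with
    | _ k ih =>
      intro C hk hsub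
      rcases Set.eq_empty_or_nonempty Cᶜ with he | ⟨w, hw⟩
      · have hC : C = Set.univ := by rwa [Set.compl_empty_iff] at he
        exact hC ▸ PsdDeriv.refl _
      · have hwC : w ∉ C := hw
        obtain ⟨b, rfl⟩ : ∃ b, w = Sum.inr b := by
          cases w with
          | inl a => exact absurd (hsub ⟨a, rfl⟩) hwC
          | inr b => exact ⟨b, rfl⟩
        obtain ⟨u, hu, huL⟩ : ∃ u ∈ Set.range (Sum.inl : α → α ⊕ β), u ∉ L := by
          by_contra hc
          push_neg at hc
          have hle : (Set.range (Sum.inl : α → α ⊕ β)).ncard ≤ L.ncard :=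
            Set.ncard_le_ncard hc L.toFinite
          rw [ncard_range_inl] at hle
          omega
        obtain ⟨a, rfl⟩ := hu
        have hforce : PsdForce (completeBipartiteGraph α β) L C (Sum.inl a) (Sum.inr b) := by
          refine ⟨hsub ⟨a, rfl⟩, huL, hwC, by simp, ?_⟩
          intro w' hadj hsame
          obtain ⟨hw1, hw2, hreach⟩ := hsame
          have heq := reach_eq_inr (s := Cᶜ) ?_ hreach
          · exact (congrArg Subtype.val heq).symm
          · intro x hx
            cases x with
            | inl a' => exact absurd (hsub ⟨a', rfl⟩) hx
            | inr b' => exact ⟨b', rfl⟩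
        have hstep : PsdDeriv (completeBipartiteGraph α β) L C (insert (Sum.inr b) C) :=
          (PsdDeriv.refl C).step hforce
        have hlt : (insert (Sum.inr b) C)ᶜ.ncard < k := by
          have hce : (insert (Sum.inr b) C)ᶜ = Cᶜ \ {Sum.inr b} := by
            ext x; simp [Set.mem_insert_iff, not_or, and_comm]
          rw [← hk, hce]
          exact Set.ncard_diff_singleton_lt_of_mem hw Cᶜ.toFinite
        exact psdDeriv_trans hstep
          (ih _ hlt _ rfl (hsub.trans (Set.subset_insert _ _)))
  intro C hsub
  exact key _ C rfl hsub

lemma psd_force_from_right {L : Set (α ⊕ β)} (hL : L.ncard < Fintype.card β) :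
    ∀ (C : Set (α ⊕ β)), Set.range Sum.inr ⊆ C →
      PsdDeriv (completeBipartiteGraph α β) L C Set.univ := by
  have key : ∀ k (C : Set (α ⊕ β)), Cᶜ.ncard = k → Set.range Sum.inr ⊆ C →
      PsdDeriv (completeBipartiteGraph α β) L C Set.univ := by
    intro k
    induction k using Nat.strong_induction_on with
    | _ k ih =>
      intro C hk hsub
      rcases Set.eq_empty_or_nonempty Cᶜ with he | ⟨w, hw⟩
      · have hC : C = Set.univ := by rwa [Set.compl_empty_iff] at he
        exact hC ▸ PsdDeriv.refl _
      · have hwC : w ∉ C := hw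
        obtain ⟨a, rfl⟩ : ∃ a, w = Sum.inl a := by
          cases w with
          | inl a => exact ⟨a, rfl⟩
          | inr b => exact absurd (hsub ⟨b, rfl⟩) hwC
        obtain ⟨u, hu, huL⟩ : ∃ u ∈ Set.range (Sum.inr : β → α ⊕ β), u ∉ L := by
          by_contra hc
          push_neg at hc
          have hle : (Set.range (Sum.inr : β → α ⊕ β)).ncard ≤ L.ncard :=
            Set.ncard_le_ncard hc L.toFinite
          rw [ncard_range_inr] at hle
          omega
        obtain ⟨b, rfl⟩ := hu
        have hforce : PsdForce (completeBipartiteGraph α β) L C (Sum.inr b) (Sum.inl a) := by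
          refine ⟨hsub ⟨b, rfl⟩, huL, hwC, by simp, ?_⟩
          intro w' hadj hsame
          obtain ⟨hw1, hw2, hreach⟩ := hsame
          have heq := reach_eq_inl (s := Cᶜ) ?_ hreach
          · exact (congrArg Subtype.val heq).symm
          · intro x hx
            cases x with
            | inl a' => exact ⟨a', rfl⟩
            | inr b' => exact absurd (hsub ⟨b', rfl⟩) hx
        have hstep : PsdDeriv (completeBipartiteGraph α β) L C (insert (Sum.inl a) C) :=
          (PsdDeriv.refl C).step hforce
        have hlt : (insert (Sum.inl a) C)ᶜ.ncard < k := by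
          have hce : (insert (Sum.inl a) C)ᶜ = Cᶜ \ {Sum.inl a} := by
            ext x; simp [Set.mem_insert_iff, not_or, and_comm]
          rw [← hk, hce]
          exact Set.ncard_diff_singleton_lt_of_mem hw Cᶜ.toFinite
        exact psdDeriv_trans hstep
          (ih _ hlt _ rfl (hsub.trans (Set.subset_insert _ _)))
  intro C hsub
  exact key _ C rfl hsub

lemma small_side {W : Type*} [Fintype W] {s B : Set W} (h : B.ncard < s.ncard) :
    (s \ B).Nonempty ∧ ((s \ B).Nontrivial ∨ B ⊆ s) := by
  constructor
  · rw [Set.diff_nonempty]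
    intro hsub
    exact absurd (Set.ncard_le_ncard hsub B.toFinite) (by omega)
  · by_cases hnt : (s \ B).Nontrivial
    · exact Or.inl hnt
    · right
      rw [Set.not_nontrivial_iff] at hnt
      have hss : (s \ B).ncard ≤ 1 := by
        rcases hnt.eq_empty_or_singleton with he | ⟨x, he⟩ <;> simp [he]
      have e := Set.ncard_inter_add_ncard_diff_eq_ncard s B s.toFinite
      have h4 : (s ∩ B).ncard ≤ B.ncard := Set.ncard_le_ncard Set.inter_subset_right B.toFinite
      have heq : s ∩ B = B :=
        Set.eq_of_subset_of_ncard_le Set.inter_subset_right (by omega) B.toFinite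
      exact heq ▸ Set.inter_subset_left

lemma psd_stuck {L B : Set (α ⊕ β)}
    (h1 : (Set.range (Sum.inl : α → α ⊕ β) \ B).Nonempty)
    (h2 : (Set.range (Sum.inr : β → α ⊕ β) \ B).Nonempty)
    (h3 : (Set.range (Sum.inl : α → α ⊕ β) \ B).Nontrivial ∨ B ⊆ Set.range Sum.inl)
    (h4 : (Set.range (Sum.inr : β → α ⊕ β) \ B).Nontrivial ∨ B ⊆ Set.range Sum.inr)
    (u w : α ⊕ β) : ¬ PsdForce (completeBipartiteGraph α β) L B u w := by
  rintro ⟨huB, -, hwB, hadj, huniq⟩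
  cases u with
  | inl a =>
    obtain ⟨b, rfl⟩ : ∃ b, w = Sum.inr b := by
      cases w with
      | inl a' => simp at hadj
      | inr b => exact ⟨b, rfl⟩
    have hnt : (Set.range (Sum.inr : β → α ⊕ β) \ B).Nontrivial := by
      rcases h4 with h | h
      · exact h
      · exact absurd (h huB) (by simp)
    obtain ⟨x, hx, y, hy, hxy⟩ := hnt
    obtain ⟨z, hz, hzw⟩ : ∃ z, z ∈ Set.range (Sum.inr : β → α ⊕ β) \ B ∧ z ≠ Sum.inr b := by
      by_cases hxw : x = Sum.inr b
      · exact ⟨y, hy, fun hyw => hxy (by rw [hxw, hyw])⟩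
      · exact ⟨x, hx, hxw⟩
    obtain ⟨⟨c, rfl⟩, hzB⟩ := hz
    obtain ⟨w0, ⟨a0, rfl⟩, ha0B⟩ := h1
    have hsame : SameComp (completeBipartiteGraph α β) B (Sum.inr b) (Sum.inr c) := by
      refine ⟨hwB, hzB, ?_⟩
      have e1 : ((completeBipartiteGraph α β).induce Bᶜ).Adj
          ⟨Sum.inr b, hwB⟩ ⟨Sum.inl a0, ha0B⟩ := by simp
      have e2 : ((completeBipartiteGraph α β).induce Bᶜ).Adj
          ⟨Sum.inl a0, ha0B⟩ ⟨Sum.inr c, hzB⟩ := by simp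
      exact e1.reachable.trans e2.reachable
    exact hzw (huniq (Sum.inr c) (by simp) hsame)
  | inr b0 =>
    obtain ⟨a, rfl⟩ : ∃ a, w = Sum.inl a := by
      cases w with
      | inl a => exact ⟨a, rfl⟩
      | inr b' => simp at hadj
    have hnt : (Set.range (Sum.inl : α → α ⊕ β) \ B).Nontrivial := by
      rcases h3 with h | h
      · exact h
      · exact absurd (h huB) (by simp)
    obtain ⟨x, hx, y, hy, hxy⟩ := hnt
    obtain ⟨z, hz, hzw⟩ : ∃ z, z ∈ Set.range (Sum.inl : α → α ⊕ β) \ B ∧ z ≠ Sum.inl a := by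
      by_cases hxw : x = Sum.inl a
      · exact ⟨y, hy, fun hyw => hxy (by rw [hxw, hyw])⟩
      · exact ⟨x, hx, hxw⟩
    obtain ⟨⟨c, rfl⟩, hzB⟩ := hz
    obtain ⟨w0, ⟨b1, rfl⟩, hb1B⟩ := h2
    have hsame : SameComp (completeBipartiteGraph α β) B (Sum.inl a) (Sum.inl c) := by
      refine ⟨hwB, hzB, ?_⟩
      have e1 : ((completeBipartiteGraph α β).induce Bᶜ).Adj
          ⟨Sum.inl a, hwB⟩ ⟨Sum.inr b1, hb1B⟩ := by simp
      have e2 : ((completeBipartiteGraph α β).induce Bᶜ).Adj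
          ⟨Sum.inr b1, hb1B⟩ ⟨Sum.inl c, hzB⟩ := by simp
      exact e1.reachable.trans e2.reachable
    exact hzw (huniq (Sum.inl c) (by simp) hsame)

lemma psd_stuck_deriv {L B C : Set (α ⊕ β)}
    (h1 : (Set.range (Sum.inl : α → α ⊕ β) \ B).Nonempty)
    (h2 : (Set.range (Sum.inr : β → α ⊕ β) \ B).Nonempty)
    (h3 : (Set.range (Sum.inl : α → α ⊕ β) \ B).Nontrivial ∨ B ⊆ Set.range Sum.inl)
    (h4 : (Set.range (Sum.inr : β → α ⊕ β) \ B).Nontrivial ∨ B ⊆ Set.range Sum.inr)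
    (h : PsdDeriv (completeBipartiteGraph α β) L B C) : C = B := by
  induction h with
  | refl => rfl
  | step _ f ih =>
    rw [ih] at f
    exact absurd f (psd_stuck h1 h2 h3 h4 _ _)

end Aux

/-- leaky psd forcing numbers of the complete bipartite graph. -/
theorem leakyPsdNum_completeBipartite (m n ℓ : ℕ) :
    (ℓ < min m n →
      leakyPsdNum (completeBipartiteGraph (Fin m) (Fin n)) ℓ = min m n) ∧
    (min m n ≤ ℓ → ℓ < max m n →
      leakyPsdNum (completeBipartiteGraph (Fin m) (Fin n)) ℓ = max m n) ∧
    (max m n ≤ ℓ →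
      leakyPsdNum (completeBipartiteGraph (Fin m) (Fin n)) ℓ = m + n) := by
  set G := completeBipartiteGraph (Fin m) (Fin n) with hG
  set S : Set ℕ := {k | ∃ B : Set (Fin m ⊕ Fin n), B.ncard = k ∧ IsLeakyPsdForcingSet G ℓ B}
    with hS
  have hnum : leakyPsdNum G ℓ = sInf S := rfl
  have cL : (Set.range (Sum.inl : Fin m → Fin m ⊕ Fin n)).ncard = m := by
    rw [ncard_range_inl, Fintype.card_fin]
  have cR : (Set.range (Sum.inr : Fin n → Fin m ⊕ Fin n)).ncard = n := by
    rw [ncard_range_inr, Fintype.card_fin]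
  -- membership facts (upper bounds)
  have memL : ℓ < m → m ∈ S := by
    intro hl
    refine ⟨Set.range Sum.inl, cL, fun L _ hLc => ?_⟩
    exact psd_force_from_left (by rw [Fintype.card_fin]; omega) _ subset_rfl
  have memR : ℓ < n → n ∈ S := by
    intro hl
    refine ⟨Set.range Sum.inr, cR, fun L _ hLc => ?_⟩
    exact psd_force_from_right (by rw [Fintype.card_fin]; omega) _ subset_rfl
  have memU : m + n ∈ S := by
    refine ⟨Set.univ, ?_, fun L _ _ => PsdDeriv.refl _⟩
    simp [Set.ncard_univ, Nat.card_eq_fintype_card]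
  -- lower bound: blocked vertex argument
  have blockedR : ∀ {B : Set (Fin m ⊕ Fin n)}, IsLeakyPsdForcingSet G ℓ B → m ≤ ℓ →
      B.ncard < n → False := by
    intro B hB hml hlt
    obtain ⟨⟨w, ⟨b, rfl⟩, hwB⟩, -⟩ := small_side (s := Set.range Sum.inr) (B := B)
      (by rw [cR]; omega)
    have hder := hB (Set.range Sum.inl) (Set.toFinite _) (by rw [cL]; omega)
    refine psd_blocked hwB ?_ hder (Set.mem_univ _)
    intro u hadj
    cases u with
    | inl a => exact ⟨a, rfl⟩
    | inr b' => simp [hG] at hadj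
  have blockedL : ∀ {B : Set (Fin m ⊕ Fin n)}, IsLeakyPsdForcingSet G ℓ B → n ≤ ℓ →
      B.ncard < m → False := by
    intro B hB hml hlt
    obtain ⟨⟨w, ⟨a, rfl⟩, hwB⟩, -⟩ := small_side (s := Set.range Sum.inl) (B := B)
      (by rw [cL]; omega)
    have hder := hB (Set.range Sum.inr) (Set.toFinite _) (by rw [cR]; omega)
    refine psd_blocked hwB ?_ hder (Set.mem_univ _)
    intro u hadj
    cases u with
    | inl a' => simp [hG] at hadj
    | inr b => exact ⟨b, rfl⟩
  refine ⟨?_, ?_, ?_⟩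
  · -- case ℓ < min m n
    intro hl
    have hm : 0 < m := by omega
    have hn : 0 < n := by omega
    have lb : ∀ k ∈ S, min m n ≤ k := by
      rintro k ⟨B, hBk, hB⟩
      by_contra hk
      push_neg at hk
      obtain ⟨e1, e3⟩ := small_side (s := Set.range (Sum.inl : Fin m → Fin m ⊕ Fin n))
        (B := B) (by rw [cL]; omega)
      obtain ⟨e2, e4⟩ := small_side (s := Set.range (Sum.inr : Fin n → Fin m ⊕ Fin n))
        (B := B) (by rw [cR]; omega)
      have hder := hB ∅ Set.finite_empty (by simp)
      have := psd_stuck_deriv e1 e2 e3 e4 hder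
      obtain ⟨x, hx⟩ := e1
      exact hx.2 (this ▸ Set.mem_univ x)
    have mem : min m n ∈ S := by
      rcases le_total m n with hmn | hmn
      · rw [min_eq_left hmn]; exact memL (by omega)
      · rw [min_eq_right hmn]; exact memR (by omega)
    rw [hnum]
    exact le_antisymm (Nat.sInf_le mem) (le_csInf ⟨_, mem⟩ lb)
  · -- case min m n ≤ ℓ < max m n
    intro hl1 hl2
    have lb : ∀ k ∈ S, max m n ≤ k := by
      rintro k ⟨B, hBk, hB⟩
      by_contra hk
      push_neg at hk
      rcases le_total m n with hmn | hmn
      · rw [max_eq_right hmn] at hk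
        exact blockedR hB (by omega) (by omega)
      · rw [max_eq_left hmn] at hk
        exact blockedL hB (by omega) (by omega)
    have mem : max m n ∈ S := by
      rcases le_total m n with hmn | hmn
      · rw [max_eq_right hmn]; exact memR (by omega)
      · rw [max_eq_left hmn]; exact memL (by omega)
    rw [hnum]
    exact le_antisymm (Nat.sInf_le mem) (le_csInf ⟨_, mem⟩ lb)
  · -- case max m n ≤ ℓ
    intro hl
    have lb : ∀ k ∈ S, m + n ≤ k := by
      rintro k ⟨B, hBk, hB⟩
      by_contra hk
      push_neg at hk
      obtain ⟨w, hwB⟩ : ∃ w, w ∉ B := by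
        by_contra hc
        push_neg at hc
        have : B = Set.univ := Set.eq_univ_of_forall hc
        rw [this] at hBk
        simp [Set.ncard_univ, Nat.card_eq_fintype_card] at hBk
        omega
      cases w with
      | inl a =>
        have hder := hB (Set.range Sum.inr) (Set.toFinite _) (by rw [cR]; omega)
        refine psd_blocked hwB ?_ hder (Set.mem_univ _)
        intro u hadj
        cases u with
        | inl a' => simp [hG] at hadj
        | inr b => exact ⟨b, rfl⟩
      | inr b =>
        have hder := hB (Set.range Sum.inl) (Set.toFinite _) (by rw [cL]; omega)
        refine psd_blocked hwB ?_ hder (Set.mem_univ _)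
        intro u hadj
        cases u with
        | inl a => exact ⟨a, rfl⟩
        | inr b' => simp [hG] at hadj
    rw [hnum]
    exact le_antisymm (Nat.sInf_le memU) (le_csInf ⟨_, memU⟩ lb)
end

section
/- Let T be a tree and ℓ ≥ 1. Then the ℓ-leaky positive semidefinite forcing number of T equals the number of vertices of T of degree at most ℓ: Z⁺₍ℓ₎(T) = |{v ∈ V(T) : deg(v) ≤ ℓ}|. -/
open SimpleGraph Set

variable {V : Type*}

lemma sameComp_refl {G : SimpleGraph V} {C : Set V} {a : V} (ha : a ∈ Cᶜ) :
    SameComp G C a a := ⟨ha, ha, .refl _⟩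

lemma sameComp_symm {G : SimpleGraph V} {C : Set V} {a b : V} :
    SameComp G C a b → SameComp G C b a := fun ⟨h1, h2, h⟩ => ⟨h2, h1, h.symm⟩

lemma sameComp_trans {G : SimpleGraph V} {C : Set V} {a b c : V} :
    SameComp G C a b → SameComp G C b c → SameComp G C a c :=
  fun ⟨h1, h2, h⟩ ⟨_, h3, h'⟩ => ⟨h1, h3, h.trans h'⟩

lemma sameComp_adj {G : SimpleGraph V} {C : Set V} {w0 a b : V}
    (h : SameComp G C w0 a) (hadj : G.Adj a b) (hb : b ∈ Cᶜ) : SameComp G C w0 b := by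
  obtain ⟨h0, ha, hr⟩ := h
  exact ⟨h0, hb, hr.trans (SimpleGraph.Adj.reachable (by exact hadj))⟩

lemma tree_unique_nbr {T : SimpleGraph V} (hT : T.IsTree) {C : Set V} {u w w' : V}
    (hu : u ∈ C) (h1 : T.Adj u w) (h2 : T.Adj u w') (hsc : SameComp T C w w') : w' = w := by
  classical
  obtain ⟨hw, hw', ⟨q0⟩⟩ := hsc
  have q1 : T.Walk w w' := q0.map (SimpleGraph.Embedding.induce Cᶜ).toHom
  have hq1supp : ∀ x ∈ (q0.map (SimpleGraph.Embedding.induce Cᶜ).toHom).support, x ∈ Cᶜ := by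
    intro x hx
    rw [Walk.support_map] at hx
    obtain ⟨y, _, rfl⟩ := List.mem_map.mp hx
    exact y.2
  have hq2supp : ∀ x ∈ ((q0.map (SimpleGraph.Embedding.induce Cᶜ).toHom).reverse.bypass).support,
      x ∈ Cᶜ := by
    intro x hx
    have hx2 := Walk.support_bypass_subset _ hx
    rw [Walk.support_reverse] at hx2
    exact hq1supp x (List.mem_reverse.mp hx2)
  have hpath1 : (Walk.cons h1 Walk.nil).IsPath := by simp [h1.ne]
  have hpath2 : (Walk.cons h2 ((q0.map (SimpleGraph.Embedding.induce Cᶜ).toHom).reverse.bypass)).IsPath := by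
    apply (Walk.cons_isPath_iff _ _).mpr
    exact ⟨Walk.bypass_isPath _, fun hu' => (hq2supp u hu') hu⟩
  have heq := (hT.existsUnique_path u w).unique hpath2 hpath1
  have hlen := congrArg Walk.length heq
  replace hlen : ((q0.map (SimpleGraph.Embedding.induce Cᶜ).toHom).reverse.bypass).length + 1 = 0 + 1 := hlen
  have h0 : ((q0.map (SimpleGraph.Embedding.induce Cᶜ).toHom).reverse.bypass).length = 0 := by
    omega
  exact Walk.eq_of_length_eq_zero h0

lemma compSet_walk {G : SimpleGraph V} {C : Set V} {w0 : V} {a b : ↥(Cᶜ)}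
    (p : (G.induce Cᶜ).Walk a b) :
    ∀ ha : SameComp G C w0 ↑a,
      ∃ hb : SameComp G C w0 ↑b,
        (G.induce {x | SameComp G C w0 x}).Reachable ⟨↑a, ha⟩ ⟨↑b, hb⟩ := by
  induction p with
  | nil => exact fun ha => ⟨ha, .refl _⟩
  | @cons u v w h p ih =>
    intro ha
    have hv : SameComp G C w0 ↑v := sameComp_adj ha (by exact h) v.2
    obtain ⟨hb, hr⟩ := ih hv
    exact ⟨hb, Reachable.trans (SimpleGraph.Adj.reachable (by exact h)) hr⟩

lemma compSet_connected (G : SimpleGraph V) {C : Set V} {w0 : V} (hw0 : w0 ∈ Cᶜ) :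
    (G.induce {x | SameComp G C w0 x}).Connected := by
  have h0 : SameComp G C w0 w0 := sameComp_refl hw0
  have key : ∀ x : ↥{x | SameComp G C w0 x},
      (G.induce {x | SameComp G C w0 x}).Reachable ⟨w0, h0⟩ x := by
    rintro ⟨x, hx⟩
    obtain ⟨h0', hx', ⟨p⟩⟩ := hx
    obtain ⟨hb, hr⟩ := compSet_walk p h0
    exact hr
  rw [connected_iff]
  exact ⟨fun x y => (key x).symm.trans (key y), ⟨⟨w0, h0⟩⟩⟩

lemma induce_acyclic {G : SimpleGraph V} (h : G.IsAcyclic) (s : Set V) :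
    (G.induce s).IsAcyclic := by
  intro v c hc
  exact h _ ((SimpleGraph.Walk.map_isCycle_iff_of_injective
    (f := (SimpleGraph.Embedding.induce s).toHom) Subtype.val_injective).mpr hc)

lemma induce_degree {G : SimpleGraph V} [DecidableRel G.Adj] (W : Set V) [Fintype ↥W]
    [DecidableRel (G.induce W).Adj] [DecidableEq V] [Fintype V] (v : ↥W) :
    (G.induce W).degree v = ((G.neighborFinset ↑v) ∩ W.toFinset).card := by
  rw [← card_neighborFinset_eq_degree]
  refine Finset.card_bij (fun a _ => ↑a) ?_ ?_ ?_
  · intro a ha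
    rw [mem_neighborFinset] at ha
    rw [Finset.mem_inter, mem_neighborFinset, Set.mem_toFinset]
    exact ⟨ha, a.2⟩
  · intro a _ b _ hab
    exact Subtype.ext hab
  · intro b hb
    rw [Finset.mem_inter, mem_neighborFinset, Set.mem_toFinset] at hb
    exact ⟨⟨b, hb.2⟩, by rw [mem_neighborFinset]; exact hb.1, rfl⟩

lemma progress [Fintype V] {T : SimpleGraph V} (hT : T.IsTree) {ℓ : ℕ} (hℓ : 1 ≤ ℓ)
    {C L : Set V} (hC : ∀ v, (T.neighborSet v).ncard ≤ ℓ → v ∈ C) (hne : C ≠ univ)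
    (hL : L.ncard ≤ ℓ) : ∃ u w, PsdForce T L C u w := by
  classical
  obtain ⟨w0, hw0⟩ : ∃ w0, w0 ∉ C := by
    by_contra h
    push_neg at h
    exact hne (eq_univ_iff_forall.mpr h)
  have hw0c : w0 ∈ Cᶜ := hw0
  set W : Set V := {x | SameComp T C w0 x} with hWdef
  have hWsub : ∀ x ∈ W, x ∉ C := fun x hx => hx.2.1
  have hclosure : ∀ w ∈ W, ∀ x, T.Adj w x → x ∉ W → x ∈ C := by
    intro w hw x hadj hxW
    by_contra hxC
    exact hxW (sameComp_adj hw hadj hxC)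
  have hw0W : w0 ∈ W := sameComp_refl hw0c
  have hsame : ∀ w ∈ W, ∀ w' ∈ W, SameComp T C w w' := by
    intro w hw w' hw'
    exact sameComp_trans (sameComp_symm hw) hw'
  -- the induced subgraph on W is a tree
  have htree : (T.induce W).IsTree := ⟨compSet_connected T hw0c, induce_acyclic hT.2 W⟩
  have hedge : (T.induce W).edgeFinset.card + 1 = Fintype.card ↥W := htree.card_edgeFinset
  have hhand : ∑ v : ↥W, (T.induce W).degree v = 2 * (T.induce W).edgeFinset.card :=
    sum_degrees_eq_twice_card_edges _
  have hdeg' : ∀ v : ↥W, (T.induce W).degree v = ((T.neighborFinset ↑v) ∩ W.toFinset).card :=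
    fun v => induce_degree W v
  have hsum_inter : ∑ w ∈ W.toFinset, ((T.neighborFinset w) ∩ W.toFinset).card
      = 2 * (T.induce W).edgeFinset.card := by
    rw [← hhand]
    rw [Finset.sum_subtype W.toFinset (fun x => Set.mem_toFinset) (fun w => ((T.neighborFinset w) ∩ W.toFinset).card)]
    exact (Finset.sum_congr rfl (fun v _ => (hdeg' v).symm))
  -- boundary finset
  set Ff : Finset V := W.toFinset.biUnion (fun w => T.neighborFinset w \ W.toFinset) with hFf
  have hdisj : ∀ x ∈ W.toFinset, ∀ y ∈ W.toFinset, x ≠ y →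
      Disjoint (T.neighborFinset x \ W.toFinset) (T.neighborFinset y \ W.toFinset) := by
    intro x hx y hy hxy
    rw [Finset.disjoint_left]
    intro u hux huy
    rw [Finset.mem_sdiff, mem_neighborFinset] at hux huy
    have hxW : x ∈ W := Set.mem_toFinset.mp hx
    have hyW : y ∈ W := Set.mem_toFinset.mp hy
    have huW : u ∉ W := fun h => hux.2 (Set.mem_toFinset.mpr h)
    have huC : u ∈ C := hclosure x hxW u hux.1 huW
    exact hxy ((tree_unique_nbr hT huC hux.1.symm huy.1.symm (hsame x hxW y hyW)).symm)
  have hcard : Ff.card = ∑ w ∈ W.toFinset, (T.neighborFinset w \ W.toFinset).card :=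
    Finset.card_biUnion hdisj
  have hdegbig : ∀ w ∈ W.toFinset, ℓ + 1 ≤ (T.neighborFinset w).card := by
    intro w hw
    have hwW : w ∈ W := Set.mem_toFinset.mp hw
    have : ¬ (T.neighborSet w).ncard ≤ ℓ := fun h => hWsub w hwW (hC w h)
    have hcard : (T.neighborSet w).ncard = (T.neighborFinset w).card := by
      rw [Set.ncard_eq_toFinset_card']
      congr 1
    omega
  have hsplit : ∑ w ∈ W.toFinset, (T.neighborFinset w \ W.toFinset).card
      + ∑ w ∈ W.toFinset, ((T.neighborFinset w) ∩ W.toFinset).card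
      = ∑ w ∈ W.toFinset, (T.neighborFinset w).card := by
    rw [← Finset.sum_add_distrib]
    exact Finset.sum_congr rfl (fun w _ => Finset.card_sdiff_add_card_inter _ _)
  have hsum_ge : (ℓ + 1) * W.toFinset.card ≤ ∑ w ∈ W.toFinset, (T.neighborFinset w).card := by
    calc (ℓ + 1) * W.toFinset.card = ∑ _w ∈ W.toFinset, (ℓ + 1) := by
          rw [Finset.sum_const, smul_eq_mul, mul_comm]
      _ ≤ ∑ w ∈ W.toFinset, (T.neighborFinset w).card := Finset.sum_le_sum hdegbig
  have hWcard : W.toFinset.card = Fintype.card ↥W := Set.toFinset_card W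
  -- conclude Ff.card ≥ ℓ + 1
  have hFbig : ℓ + 1 ≤ Ff.card := by
    set e := (T.induce W).edgeFinset.card
    have hmul : (ℓ + 1) * W.toFinset.card = (ℓ + 1) * e + (ℓ + 1) := by
      have : W.toFinset.card = e + 1 := by omega
      rw [this]; ring
    have h2e : 2 * e ≤ (ℓ + 1) * e := Nat.mul_le_mul_right e (by omega)
    omega
  -- pick a non-leak blue vertex in Ff
  have hnotsub : ¬ (↑Ff : Set V) ⊆ L := by
    intro hsub
    have := Set.ncard_le_ncard hsub (Set.toFinite L)
    rw [Set.ncard_coe_finset] at this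
    omega
  obtain ⟨u, huF, huL⟩ := Set.not_subset.mp hnotsub
  have huF' : u ∈ Ff := huF
  obtain ⟨w, hwW.toFinset, hw⟩ := Finset.mem_biUnion.mp huF'
  rw [Finset.mem_sdiff, mem_neighborFinset] at hw
  have hwW : w ∈ W := Set.mem_toFinset.mp hwW.toFinset
  have huW : u ∉ W := fun h => hw.2 (Set.mem_toFinset.mpr h)
  have huC : u ∈ C := hclosure w hwW u hw.1 huW
  refine ⟨u, w, huC, huL, hWsub w hwW, hw.1.symm, ?_⟩
  intro w' h1 h2
  exact tree_unique_nbr hT huC hw.1.symm h1 h2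

lemma derive_aux [Fintype V] {T : SimpleGraph V} (hT : T.IsTree) {ℓ : ℕ} (hℓ : 1 ≤ ℓ)
    {B L : Set V} (hL : L.ncard ≤ ℓ) :
    ∀ n (C : Set V), Cᶜ.ncard ≤ n → PsdDeriv T L B C →
      (∀ v, (T.neighborSet v).ncard ≤ ℓ → v ∈ C) → PsdDeriv T L B Set.univ := by
  intro n
  induction n with
  | zero =>
    intro C hc hd _
    have : Cᶜ = ∅ := (Set.ncard_eq_zero (Set.toFinite _)).mp (Nat.le_zero.mp hc)
    rw [← Set.compl_empty_iff.mp this]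
    exact hd
  | succ n ih =>
    intro C hc hd hC
    by_cases h : C = Set.univ
    · exact h ▸ hd
    obtain ⟨u, w, hf⟩ := progress hT hℓ hC h hL
    have hwC : w ∉ C := hf.2.2.1
    have hlt : (insert w C)ᶜ.ncard < Cᶜ.ncard := by
      have he : (insert w C)ᶜ = Cᶜ \ {w} := by
        ext x
        simp only [Set.mem_compl_iff, Set.mem_insert_iff, Set.mem_diff, Set.mem_singleton_iff]
        tauto
      rw [he]
      exact Set.ncard_diff_singleton_lt_of_mem hwC (Set.toFinite _)
    exact ih (insert w C) (by omega) (PsdDeriv.step hd hf)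
      (fun v hv => Set.mem_insert_of_mem _ (hC v hv))

lemma lower_bound [Fintype V] {T : SimpleGraph V} {ℓ : ℕ} {B : Set V}
    (hB : IsLeakyPsdForcingSet T ℓ B) {v : V} (hv : (T.neighborSet v).ncard ≤ ℓ) : v ∈ B := by
  by_contra hvB
  have hd := hB (T.neighborSet v) (Set.toFinite _) hv
  suffices h : ∀ C : Set V, PsdDeriv T (T.neighborSet v) B C → v ∉ C by
    exact h Set.univ hd (Set.mem_univ v)
  intro C hC
  induction hC with
  | refl => exact hvB
  | step hd' hf ih =>
    intro hmem
    obtain ⟨hu1, hu2, hu3, hu4, hu5⟩ := hf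
    rcases Set.mem_insert_iff.mp hmem with rfl | h
    · exact hu2 (hu4.symm : T.Adj v _)
    · exact ih h

/-- for a tree `T` and `ℓ ≥ 1`,
`Z⁺₍ℓ₎(T) = |{v : deg v ≤ ℓ}|`. -/
theorem leakyPsdNum_tree [Fintype V] (T : SimpleGraph V) (hT : T.IsTree)
    (ℓ : ℕ) (hℓ : 1 ≤ ℓ) :
    leakyPsdNum T ℓ = {v : V | (T.neighborSet v).ncard ≤ ℓ}.ncard := by
  set S : Set V := {v : V | (T.neighborSet v).ncard ≤ ℓ} with hS
  have hSforce : IsLeakyPsdForcingSet T ℓ S := by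
    intro L _ hL
    exact derive_aux hT hℓ hL Sᶜ.ncard S le_rfl (PsdDeriv.refl S) (fun v hv => hv)
  have hmem : S.ncard ∈ {k | ∃ B : Set V, B.ncard = k ∧ IsLeakyPsdForcingSet T ℓ B} :=
    ⟨S, rfl, hSforce⟩
  refine le_antisymm (Nat.sInf_le hmem) (le_csInf ⟨_, hmem⟩ ?_)
  rintro k ⟨B, rfl, hBf⟩
  exact Set.ncard_le_ncard (fun v hv => lower_bound hBf hv) (Set.toFinite B)
end

section
/- A set B ⊆ V(G) is an ℓ-leaky positive semidefinite forcing set if and only if B intersects every ℓ-leaky positive semidefinite fort of G. -/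
open SimpleGraph Set

variable {V : Type*}

/-- The vertex set of the connected component of the induced subgraph `G[F]`
containing `w ∈ F`. -/
def compOf (G : SimpleGraph V) (F : Set V) (w : V) (hw : w ∈ F) : Set V :=
  {x | ∃ hx : x ∈ F, (G.induce F).Reachable ⟨w, hw⟩ ⟨x, hx⟩}

/-- An `ℓ`-leaky positive semidefinite fort: a nonempty `F ⊆ V(G)` such that for
each connected component `Fᵢ` of `G[F]` and each `v ∉ F`, either `v` has no
neighbor in `Fᵢ`, or `v` has at least two neighbors in `Fᵢ`, or at most `ℓ`
vertices outside `F` have exactly one neighbor in `Fᵢ`. -/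
def IsLeakyPsdFort (G : SimpleGraph V) (ℓ : ℕ) (F : Set V) : Prop :=
  F.Nonempty ∧ ∀ (w : V) (hw : w ∈ F), ∀ v ∉ F,
    (∀ x ∈ compOf G F w hw, ¬ G.Adj v x) ∨
    2 ≤ {x ∈ compOf G F w hw | G.Adj v x}.ncard ∨
    {u | u ∉ F ∧ {x ∈ compOf G F w hw | G.Adj u x}.ncard = 1}.ncard ≤ ℓ


lemma psdDeriv_subset {G : SimpleGraph V} {L B C : Set V} (h : PsdDeriv G L B C) :
    B ⊆ C := by
  induction h with
  | refl => exact subset_rfl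
  | step _ _ ih => exact ih.trans (Set.subset_insert _ _)

lemma mem_compOf_self {G : SimpleGraph V} {F : Set V} {w : V} (hw : w ∈ F) :
    w ∈ compOf G F w hw := ⟨hw, SimpleGraph.Reachable.refl _⟩

lemma mem_compOf_of_adj {G : SimpleGraph V} {F : Set V} {w : V} {hw : w ∈ F}
    {a b : V} (ha : a ∈ compOf G F w hw) (hb : b ∈ F) (hab : G.Adj a b) :
    b ∈ compOf G F w hw := by
  obtain ⟨ha', r⟩ := ha
  exact ⟨hb, r.trans (SimpleGraph.Adj.reachable
    (show (G.induce F).Adj ⟨a, ha'⟩ ⟨b, hb⟩ from hab))⟩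

lemma reach_of_compOf {G : SimpleGraph V} {F S : Set V} {w : V} {hw : w ∈ F}
    (hsub : compOf G F w hw ⊆ S) {a b : ↥F} (p : (G.induce F).Walk a b) :
    (a : V) ∈ compOf G F w hw →
    ∃ (ha' : (a : V) ∈ S) (hb' : (b : V) ∈ S),
      (G.induce S).Reachable ⟨(a : V), ha'⟩ ⟨(b : V), hb'⟩ := by
  induction p with
  | nil => intro ha; exact ⟨hsub ha, hsub ha, SimpleGraph.Reachable.refl _⟩
  | @cons a c b h q ih =>
    intro ha
    have hc : (c : V) ∈ compOf G F w hw := mem_compOf_of_adj ha c.2 h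
    obtain ⟨hc', hb', r⟩ := ih hc
    exact ⟨hsub ha, hb',
      (SimpleGraph.Adj.reachable
        (show (G.induce S).Adj ⟨(a : V), hsub ha⟩ ⟨(c : V), hc'⟩ from h)).trans r⟩

/-- `B` is an `ℓ`-leaky psd forcing set iff `B` intersects every
`ℓ`-leaky psd fort. -/
theorem isLeakyPsdForcingSet_iff_forts [Fintype V] (G : SimpleGraph V) (ℓ : ℕ)
    (B : Set V) :
    IsLeakyPsdForcingSet G ℓ B ↔
      ∀ F : Set V, IsLeakyPsdFort G ℓ F → (B ∩ F).Nonempty := by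

  constructor
  · -- forward direction
    intro hforce F hF
    by_contra hne
    rw [Set.not_nonempty_iff_eq_empty] at hne
    obtain ⟨⟨w, hw⟩, hfort⟩ := hF
    set L : Set V := {u | u ∉ F ∧ {x ∈ compOf G F w hw | G.Adj u x}.ncard = 1} with hLdef
    have hL : L.ncard ≤ ℓ := by
      by_cases hLe : L = ∅
      · simp [hLe]
      · obtain ⟨v, hv⟩ := Set.nonempty_iff_ne_empty.mpr hLe
        rcases hfort w hw v hv.1 with h1 | h2 | h3
        · obtain ⟨x, hx⟩ := Set.ncard_eq_one.mp hv.2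
          have hxm : x ∈ {x ∈ compOf G F w hw | G.Adj v x} := by
            rw [hx]; exact rfl
          exact absurd hxm.2 (h1 x hxm.1)
        · rw [hv.2] at h2; omega
        · exact h3
    have hderiv := hforce L (Set.toFinite L) hL
    have inv : ∀ (B0 C : Set V), PsdDeriv G L B0 C → B0 ∩ F = ∅ →
        C ∩ compOf G F w hw = ∅ := by
      intro B0 C hC
      induction hC with
      | refl =>
        intro h
        rw [Set.eq_empty_iff_forall_notMem] at h ⊢
        intro y hy
        exact h y ⟨hy.1, hy.2.1⟩
      | @step C1 u w0 hd hf ih =>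
        intro h
        have hCi := ih h
        rw [Set.eq_empty_iff_forall_notMem] at hCi ⊢
        rintro y ⟨hy1, hy2⟩
        rcases hy1 with rfl | hyC
        · -- y = w0 forced into the component: contradiction
          obtain ⟨huC, huL, hw0C, hadj, huniq⟩ := hf
          by_cases huF : u ∈ F
          · exact hCi u ⟨huC, mem_compOf_of_adj hy2 huF hadj.symm⟩
          · by_cases hN : ∃ x ∈ compOf G F w hw, G.Adj u x ∧ x ≠ y
            · obtain ⟨x, hxFi, hux, hxne⟩ := hN
              have hsubC : compOf G F w hw ⊆ C1ᶜ :=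
                fun z hz hzC => hCi z ⟨hzC, hz⟩
              obtain ⟨hw0F, r1⟩ := id hy2
              obtain ⟨hxF, r2⟩ := id hxFi
              obtain ⟨p⟩ := r1.symm.trans r2
              obtain ⟨ha', hb', r⟩ := reach_of_compOf hsubC p hy2
              exact hxne (huniq x hux ⟨ha', hb', r⟩)
            · push_neg at hN
              have hset : {x ∈ compOf G F w hw | G.Adj u x} = {y} := by
                ext z
                constructor
                · rintro ⟨hz1, hz2⟩; exact hN z hz1 hz2
                · rintro rfl; exact ⟨hy2, hadj⟩
              exact huL ⟨huF, by rw [hset]; exact Set.ncard_singleton _⟩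
        · exact hCi y ⟨hyC, hy2⟩
    have := inv B Set.univ hderiv hne
    rw [Set.univ_inter] at this
    exact Set.eq_empty_iff_forall_notMem.mp this w (mem_compOf_self hw)
  · -- reverse direction
    intro hmeet L hLfin hLcard
    have hsne : ({C : Set V | PsdDeriv G L B C}).Nonempty := ⟨B, PsdDeriv.refl B⟩
    obtain ⟨C, hC, hmax⟩ :=
      Set.Finite.exists_maximalFor Set.ncard _ (Set.toFinite _) hsne
    have hstall : ∀ u w0, ¬ PsdForce G L C u w0 := by
      intro u w0 hf
      have h1 : PsdDeriv G L B (insert w0 C) := PsdDeriv.step hC hf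
      have h2 := hmax h1 (Set.ncard_le_ncard (Set.subset_insert _ _) (Set.toFinite _))
      rw [Set.ncard_insert_of_notMem hf.2.2.1 (Set.toFinite _)] at h2
      omega
    have hCuniv : C = Set.univ := by
      by_contra hneu
      have hFne : Cᶜ.Nonempty := Set.nonempty_compl.mpr hneu
      have hfort : IsLeakyPsdFort G ℓ Cᶜ := by
        refine ⟨hFne, fun w hw v hv => Or.inr (Or.inr ?_)⟩
        refine le_trans (Set.ncard_le_ncard ?_ hLfin) hLcard
        rintro u ⟨huF, hcard⟩
        by_contra huL
        obtain ⟨x, hx⟩ := Set.ncard_eq_one.mp hcard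
        have hxmem : x ∈ {y ∈ compOf G Cᶜ w hw | G.Adj u y} := by
          rw [hx]; exact rfl
        obtain ⟨hxFi, hadj⟩ := hxmem
        have huC : u ∈ C := not_not.mp huF
        apply hstall u x
        refine ⟨huC, huL, hxFi.1, hadj, ?_⟩
        rintro w' hadj' ⟨h1, h2, r⟩
        obtain ⟨hxC, rwx⟩ := id hxFi
        have hw'mem : w' ∈ {y ∈ compOf G Cᶜ w hw | G.Adj u y} :=
          ⟨⟨h2, rwx.trans r⟩, hadj'⟩
        rw [hx] at hw'mem
        exact hw'mem
      obtain ⟨b, hbB, hbC⟩ := hmeet Cᶜ hfort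
      exact hbC (psdDeriv_subset hC hbB)
    exact hCuniv ▸ hC
end
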